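/- arXiv:2106.09101 — 3 statements merged into one kernel-verified Lean document; each statement's English description precedes it below -/
import Mathlib

section
/- Let X be a Polish space and N ≥ 2. Suppose μ ∈ 𝒫_sym(X^N) and α is a Borel probability measure on 𝒫(X) with α(𝒫_{1/N}(X)) = 1 such that for every bounded continuous φ : X^N → ℝ, ∫_{X^N} φ dμ = ∫_{𝒫_{1/N}(X)} ( ∫_{X^N} φ d(F_{N,N}(λ)) ) dα(λ). Then α = Λ_# μ, where Λ : X^N → 𝒫(X) is the map Λ(x_1,…,x_N) := (1/N) Σ_{i=1}^N δ_{x_i}. In particular, the representing measure α is unique when k = N. -/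
open MeasureTheory Filter Topology ENNReal

noncomputable section

namespace FiniteDeFinetti

variable {X : Type*}

/-- The symmetrization `S_N γ := (1/N!) ∑_{σ ∈ S_N} γ^σ` of a measure on `X^N`,
where `γ^σ` is the pushforward of `γ` under the coordinate permutation induced by `σ`. -/
def symmetrize [MeasurableSpace X] (N : ℕ) (γ : Measure (Fin N → X)) :
    Measure (Fin N → X) :=
  (N.factorial : ℝ≥0∞)⁻¹ • ∑ σ : Equiv.Perm (Fin N), γ.map (fun x i => x (σ i))

/-- The `k`-point marginal `M_k γ` of a measure on `X^N` (projection on the first `k` coords). -/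
def marginal [MeasurableSpace X] {k N : ℕ} (h : k ≤ N) (γ : Measure (Fin N → X)) :
    Measure (Fin k → X) :=
  γ.map (fun x i => x (Fin.castLE h i))

/-- `𝒫_sym(X^N)`: symmetric probability measures on `X^N`. -/
def PsymSet [MeasurableSpace X] (N : ℕ) : Set (Measure (Fin N → X)) :=
  {γ | IsProbabilityMeasure γ ∧ γ = symmetrize N γ}

/-- `𝒫_{N-rep}(X^k)`: the `N`-representable `k`-plans. -/
def NRep [MeasurableSpace X] {k N : ℕ} (h : k ≤ N) : Set (Measure (Fin k → X)) :=
  {μ | ∃ γ : Measure (Fin N → X), γ ∈ PsymSet N ∧ μ = marginal h γ}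

/-- Narrow (weak) convergence of a sequence of measures: convergence of integrals of all
bounded continuous functions. -/
def NarrowTendsto {Y : Type*} [MeasurableSpace Y] [TopologicalSpace Y]
    (μs : ℕ → Measure Y) (μ : Measure Y) : Prop :=
  ∀ φ : BoundedContinuousFunction Y ℝ,
    Tendsto (fun n => ∫ y, φ y ∂(μs n)) atTop (𝓝 (∫ y, φ y ∂μ))

/-- The empirical measure `(1/N) ∑ δ_{x_i}`. -/
def empirical [MeasurableSpace X] (N : ℕ) (x : Fin N → X) : Measure X :=
  (N : ℝ≥0∞)⁻¹ • ∑ i, Measure.dirac (x i)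

/-- Extreme point of a convex set of measures. -/
def IsExtremePt {Y : Type*} [MeasurableSpace Y] (C : Set (Measure Y)) (μ : Measure Y) : Prop :=
  μ ∈ C ∧ ∀ μ1 ∈ C, ∀ μ2 ∈ C, ∀ t : ℝ≥0∞, 0 < t → t < 1 →
    μ = t • μ1 + (1 - t) • μ2 → μ1 = μ ∧ μ2 = μ

/-- The set `E_{N,k}` of marginals of symmetrized Dirac measures. -/
def ENk [MeasurableSpace X] {k N : ℕ} (h : k ≤ N) : Set (Measure (Fin k → X)) :=
  {μ | ∃ x : Fin N → X, μ = marginal h (symmetrize N (Measure.dirac x))}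

/-- Borel σ-algebra on the space of probability measures with its narrow topology. -/
instance instMSPM {Y : Type*} [MeasurableSpace Y] [TopologicalSpace Y]
    [OpensMeasurableSpace Y] : MeasurableSpace (ProbabilityMeasure Y) := borel _

lemma empirical_isProbabilityMeasure [MeasurableSpace X] {N : ℕ} (hN : 0 < N) (x : Fin N → X) :
    IsProbabilityMeasure (empirical N x) := by
  constructor
  simp only [empirical, Measure.smul_apply, smul_eq_mul]
  rw [Measure.finset_sum_apply]
  simp only [measure_univ, Finset.sum_const, Finset.card_univ, Fintype.card_fin, nsmul_eq_mul,
    mul_one]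
  exact ENNReal.inv_mul_cancel (by exact_mod_cast hN.ne') (natCast_ne_top N)

/-- The empirical-measure map `Λ : X^N → 𝒫(X)`. -/
def empPM [MeasurableSpace X] {N : ℕ} (hN : 0 < N) (x : Fin N → X) : ProbabilityMeasure X :=
  ⟨empirical N x, empirical_isProbabilityMeasure hN x⟩

/-- The set `𝒫_{1/N}(X)` of `1/N`-quantized probability measures (as probability measures). -/
def QuantizedPM [MeasurableSpace X] (N : ℕ) : Set (ProbabilityMeasure X) :=
  {lam | ∃ x : Fin N → X, (lam : Measure X) = empirical N x}

open Classical in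
/-- The extremal `N`-representable `k`-plan `F_{N,k}(λ)` associated with a `1/N`-quantized
probability measure `λ = (1/N) ∑ δ_{x_i}`, namely `M_k S_N δ_{(x_1,…,x_N)}` (this does not
depend on the chosen enumeration of the atoms of `λ` counted with multiplicity); junk value
`λ^{⊗k}` for non-quantized `λ`. -/
def FNk [MeasurableSpace X] {k N : ℕ} (h : k ≤ N) (lam : ProbabilityMeasure X) :
    Measure (Fin k → X) :=
  if hx : ∃ x : Fin N → X, (lam : Measure X) = empirical N x then
    marginal h (symmetrize N (Measure.dirac (Classical.choose hx)))
  else Measure.pi fun _ => (lam : Measure X)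

/-! `Λ` is invariant under permutations of the coordinates, so it maps `F_{N,N}(λ) = S_N δ_x` to
`δ_λ`; hence `∫ Φ dα = ∫ Φ ∘ Λ dμ` for every bounded continuous `Φ` on `𝒫(X)`, which determines
`α`. This needs `α` to be concentrated on `𝒫_{1/N}(X)` in the measurable sense, i.e. that
`𝒫_{1/N}(X)` is closed: a narrowly convergent sequence of empirical measures is tight, and as
every atom carries mass `≥ 1/N` all atoms stay in one compact set, so a subsequence of the
atoms converges. -/

instance instBorelSpaceProbabilityMeasure {Y : Type*} [MeasurableSpace Y] [TopologicalSpace Y]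
    [OpensMeasurableSpace Y] : BorelSpace (ProbabilityMeasure Y) := ⟨rfl⟩

section Measurable

variable [MeasurableSpace X] {N : ℕ}

lemma measurable_comp_perm (σ : Equiv.Perm (Fin N)) :
    Measurable (fun (x : Fin N → X) i => x (σ i)) :=
  measurable_pi_lambda _ fun i => measurable_pi_apply (σ i)

lemma map_symmetrize_of_comp_perm {Z : Type*} [MeasurableSpace Z] {f : (Fin N → X) → Z}
    (hf : Measurable f) (hinv : ∀ (σ : Equiv.Perm (Fin N)) x, f (fun i => x (σ i)) = f x)
    (γ : Measure (Fin N → X)) :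
    (symmetrize N γ).map f = γ.map f := by
  have hσ : ∀ σ : Equiv.Perm (Fin N), (γ.map fun x i => x (σ i)).map f = γ.map f := fun σ => by
    rw [Measure.map_map hf (measurable_comp_perm σ)]
    exact congrArg (Measure.map · γ) (funext (hinv σ))
  rw [symmetrize, Measure.map_smul, Measure.map_finset_sum hf.aemeasurable]
  simp only [hσ, Finset.sum_const, Finset.card_univ, Fintype.card_perm, Fintype.card_fin,
    ← Nat.cast_smul_eq_nsmul ℝ≥0∞, smul_smul]
  rw [ENNReal.inv_mul_cancel (by exact_mod_cast N.factorial_ne_zero) (natCast_ne_top _), one_smul]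

lemma marginal_refl (γ : Measure (Fin N → X)) : marginal (le_refl N) γ = γ :=
  Measure.map_id

lemma empirical_comp_perm (x : Fin N → X) (σ : Equiv.Perm (Fin N)) :
    empirical N (fun i => x (σ i)) = empirical N x := by
  rw [empirical, empirical, Equiv.sum_comp σ fun i => Measure.dirac (x i)]

lemma inv_le_empirical_apply {x : Fin N → X} {s : Set X} {i : Fin N} (hi : x i ∈ s) :
    (N : ℝ≥0∞)⁻¹ ≤ empirical N x s :=
  calc (N : ℝ≥0∞)⁻¹ = (N : ℝ≥0∞)⁻¹ * Measure.dirac (x i) s := by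
        rw [Measure.dirac_apply_of_mem hi, mul_one]
    _ ≤ (N : ℝ≥0∞)⁻¹ * ∑ j, Measure.dirac (x j) s := by
        gcongr
        exact Finset.single_le_sum (f := fun j => Measure.dirac (x j) s)
          (fun _ _ => zero_le) (Finset.mem_univ i)
    _ = empirical N x s := by
        rw [empirical, Measure.smul_apply, Measure.finsetSum_apply, smul_eq_mul]

lemma mem_of_empirical_compl_lt {x : Fin N → X} {K : Set X}
    (hK : empirical N x Kᶜ < (N : ℝ≥0∞)⁻¹) (i : Fin N) : x i ∈ K :=
  not_not.mp fun hi => (inv_le_empirical_apply hi).not_gt hK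

lemma quantizedPM_eq_range (hN : 0 < N) : QuantizedPM (X := X) N = Set.range (empPM hN) := by
  ext lam
  exact exists_congr fun x => ⟨fun h => Subtype.ext h.symm, fun h => congrArg Subtype.val h.symm⟩

end Measurable

section Topological

variable [MeasurableSpace X] [TopologicalSpace X] [OpensMeasurableSpace X] {N : ℕ}

lemma integral_empirical (x : Fin N → X) (f : BoundedContinuousFunction X ℝ) :
    ∫ a, f a ∂(empirical N x) = (N : ℝ)⁻¹ * ∑ i, f (x i) := by
  rw [empirical, integral_smul_measure, integral_finsetSum_measure fun i _ => f.integrable _]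
  simp [integral_dirac' _ _ f.continuous.stronglyMeasurable, ENNReal.toReal_inv]

lemma continuous_empPM (hN : 0 < N) : Continuous (empPM (X := X) hN) := by
  refine continuous_iff_continuousAt.mpr fun x => ?_
  rw [ContinuousAt, ProbabilityMeasure.tendsto_iff_forall_integral_tendsto]
  intro f
  simp_rw [empPM, ProbabilityMeasure.coe_mk, integral_empirical]
  exact (continuous_const.mul (continuous_finsetSum _ fun i _ =>
    f.continuous.comp (continuous_apply i))).tendsto x

variable [SecondCountableTopology X]

lemma map_empPM_FNk (hN : 0 < N) {lam : ProbabilityMeasure X}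
    (hlam : lam ∈ QuantizedPM (X := X) N) :
    (FNk (le_refl N) lam).map (empPM hN) = Measure.dirac lam := by
  have hΛ := (continuous_empPM (X := X) hN).measurable
  rw [FNk, dif_pos (id hlam : ∃ x : Fin N → X, (lam : Measure X) = empirical N x),
    marginal_refl, map_symmetrize_of_comp_perm hΛ fun σ x => Subtype.ext (empirical_comp_perm x σ),
    Measure.map_dirac' hΛ]
  exact congrArg _ (Subtype.ext (Classical.choose_spec hlam).symm)

lemma integral_comp_empPM_FNk (hN : 0 < N)
    (Φ : BoundedContinuousFunction (ProbabilityMeasure X) ℝ)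
    {lam : ProbabilityMeasure X} (hlam : lam ∈ QuantizedPM (X := X) N) :
    ∫ y, Φ (empPM hN y) ∂(FNk (le_refl N) lam) = Φ lam := by
  rw [← integral_map (continuous_empPM hN).aemeasurable Φ.continuous.aestronglyMeasurable,
    map_empPM_FNk hN hlam, integral_dirac' _ _ Φ.continuous.stronglyMeasurable]

end Topological

lemma isClosed_quantizedPM [MeasurableSpace X] [TopologicalSpace X] [PolishSpace X]
    [BorelSpace X] {N : ℕ} (hN : 0 < N) : IsClosed (QuantizedPM (X := X) N) := by
  let := TopologicalSpace.upgradeIsCompletelyMetrizable X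
  rw [quantizedPM_eq_range hN]
  refine IsSeqClosed.isClosed fun {lams} {L} hmem hlim => ?_
  choose x hx using hmem
  have hcpt := hlim.isCompact_insert_range
  obtain ⟨K, hK, hKc⟩ := isTightMeasureSet_iff_exists_isCompact_measure_compl_le.mp
    (isTightMeasureSet_of_isCompact_closure (hcpt.isClosed.closure_eq ▸ hcpt))
    ((N : ℝ≥0∞)⁻¹ / 2) (by simp)
  have hxK : ∀ n, x n ∈ Set.univ.pi fun _ => K := fun n i _ => by
    refine mem_of_empirical_compl_lt ?_ i
    calc empirical N (x n) Kᶜ ≤ (N : ℝ≥0∞)⁻¹ / 2 :=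
          hKc _ ⟨lams n, Set.mem_insert_of_mem _ (Set.mem_range_self n), by rw [← hx n]; rfl⟩
      _ < (N : ℝ≥0∞)⁻¹ := ENNReal.half_lt_self (by simp) (by simpa using hN.ne')
  obtain ⟨y, -, φ, hφ, hxy⟩ := (isCompact_univ_pi fun _ => hK).tendsto_subseq hxK
  refine ⟨y, tendsto_nhds_unique ((continuous_empPM hN).continuousAt.tendsto.comp hxy) ?_⟩
  simpa only [Function.comp_def, hx] using hlim.comp hφ.tendsto_atTop

/-- uniqueness of the prior when `k = N`. If `μ ∈ 𝒫_sym(X^N)` is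
represented as `μ = ∫ F_{N,N}(λ) dα(λ)` by a probability measure `α` on `𝒫(X)` concentrated
on `𝒫_{1/N}(X)`, then `α = Λ_# μ` where `Λ(x_1,…,x_N) = (1/N) ∑ δ_{x_i}`. -/
theorem representing_measure_unique
    {X : Type*} [MeasurableSpace X] [TopologicalSpace X] [PolishSpace X] [BorelSpace X]
    {N : ℕ} (hN : 2 ≤ N)
    (μ : Measure (Fin N → X)) (hμ : IsProbabilityMeasure μ)
    (α : Measure (ProbabilityMeasure X)) (hα : IsProbabilityMeasure α)
    (hαq : α (QuantizedPM (X := X) N) = 1)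
    (hrep : ∀ φ : BoundedContinuousFunction (Fin N → X) ℝ,
      ∫ y, φ y ∂μ = ∫ lam, (∫ y, φ y ∂(FNk (X := X) (le_refl N) lam)) ∂α) :
    α = μ.map (empPM (X := X) (show 0 < N by omega)) := by
  have hN0 : 0 < N := by omega
  have hΛ : Continuous (empPM (X := X) hN0) := continuous_empPM hN0
  have hquant : ∀ᵐ lam ∂α, lam ∈ QuantizedPM (X := X) N :=
    (ae_mem_iff_measure_eq (isClosed_quantizedPM hN0).nullMeasurableSet).mpr
      (by rw [hαq, measure_univ])
  have : IsProbabilityMeasure (μ.map (empPM hN0)) :=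
    Measure.isProbabilityMeasure_map hΛ.aemeasurable
  refine ext_of_forall_integral_eq_of_IsFiniteMeasure fun Φ => ?_
  calc ∫ lam, Φ lam ∂α
      = ∫ lam, (∫ y, Φ (empPM hN0 y) ∂(FNk (le_refl N) lam)) ∂α :=
        integral_congr_ae (hquant.mono fun lam hlam => (integral_comp_empPM_FNk hN0 Φ hlam).symm)
    _ = ∫ y, Φ (empPM hN0 y) ∂μ := (hrep (Φ.compContinuous ⟨_, hΛ⟩)).symm
    _ = ∫ lam, Φ lam ∂(μ.map (empPM hN0)) :=
        (integral_map hΛ.aemeasurable Φ.continuous.aestronglyMeasurable).symm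

end FiniteDeFinetti
end
end

section
/- Let X be a Polish space and N ≥ k ≥ 2. Every extreme point of 𝒫_{N-rep}(X^k) is exposed: for every μ ∈ E_{N,k} := { M_k S_N δ_{(x_1,…,x_N)} : (x_1,…,x_N) ∈ X^N } there exists a bounded continuous function φ : X^k → ℝ such that ∫_{X^k} φ dμ < ∫_{X^k} φ dν for every ν ∈ 𝒫_{N-rep}(X^k) with ν ≠ μ. -/
open MeasureTheory Filter Topology ENNReal

noncomputable section

namespace FiniteDeFinetti

variable {X : Type*}

-- infra lemmas
variable [MeasurableSpace X]

lemma measurable_pmap {N : ℕ} (σ : Equiv.Perm (Fin N)) :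
    Measurable (fun z : Fin N → X => fun i => z (σ i)) :=
  measurable_pi_lambda _ fun i => measurable_pi_apply (σ i)

lemma map_pmap_symmetrize {N : ℕ} (γ : Measure (Fin N → X)) (σ : Equiv.Perm (Fin N)) :
    (symmetrize N γ).map (fun z i => z (σ i)) = symmetrize N γ := by
  unfold symmetrize
  rw [Measure.map_smul]
  congr 1
  have hmap : (∑ τ : Equiv.Perm (Fin N), γ.map (fun z i => z (τ i))).map (fun z i => z (σ i))
      = ∑ τ : Equiv.Perm (Fin N), (γ.map (fun z i => z (τ i))).map (fun z i => z (σ i)) := by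
    simp_rw [← Measure.mapₗ_apply_of_measurable (measurable_pmap σ)]
    exact map_sum (Measure.mapₗ _) _ _
  rw [hmap]
  have hterm : ∀ τ : Equiv.Perm (Fin N),
      (γ.map (fun z i => z (τ i))).map (fun z i => z (σ i))
        = γ.map (fun z i => z ((σ.trans τ) i)) := by
    intro τ
    rw [Measure.map_map (measurable_pmap σ) (measurable_pmap τ)]
    rfl
  simp_rw [hterm]
  exact Fintype.sum_equiv (Equiv.mulRight σ) _ _ (fun τ => rfl)

lemma psym_map {N : ℕ} {γ : Measure (Fin N → X)} (hγ : γ ∈ PsymSet N)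
    (σ : Equiv.Perm (Fin N)) : γ.map (fun z i => z (σ i)) = γ := by
  calc γ.map (fun z i => z (σ i)) = (symmetrize N γ).map (fun z i => z (σ i)) := by
        rw [← hγ.2]
    _ = symmetrize N γ := map_pmap_symmetrize γ σ
    _ = γ := hγ.2.symm

lemma isProb_symmetrize {N : ℕ} (γ : Measure (Fin N → X)) [IsProbabilityMeasure γ] :
    IsProbabilityMeasure (symmetrize N γ) := by
  constructor
  simp only [symmetrize, Measure.smul_apply, smul_eq_mul]
  rw [Measure.finset_sum_apply]
  have : ∀ σ : Equiv.Perm (Fin N), γ.map (fun z i => z (σ i)) Set.univ = 1 := by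
    intro σ
    rw [Measure.map_apply (measurable_pmap σ) MeasurableSet.univ]
    simp
  simp only [this, Finset.sum_const, Finset.card_univ, Fintype.card_perm, Fintype.card_fin,
    nsmul_eq_mul, mul_one]
  exact ENNReal.inv_mul_cancel (by exact_mod_cast (Nat.factorial_pos N).ne') (natCast_ne_top _)

lemma symmetrize_mem_psym {N : ℕ} (γ : Measure (Fin N → X)) [IsProbabilityMeasure γ] :
    symmetrize N γ ∈ PsymSet N := by
  have key : symmetrize N (symmetrize N γ) = symmetrize N γ := by
    conv_lhs => rw [symmetrize]
    simp_rw [map_pmap_symmetrize γ]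
    rw [Finset.sum_const, Finset.card_univ, Fintype.card_perm, Fintype.card_fin]
    rw [← Nat.cast_smul_eq_nsmul (R := ℝ≥0∞), smul_smul,
      ENNReal.inv_mul_cancel (by exact_mod_cast (Nat.factorial_pos N).ne') (natCast_ne_top _),
      one_smul]
  exact ⟨isProb_symmetrize γ, key.symm⟩

lemma integral_marginal {k N : ℕ} (h : k ≤ N) (γ : Measure (Fin N → X))
    {f : (Fin k → X) → ℝ} (hf : Measurable f) :
    ∫ y, f y ∂(marginal h γ) = ∫ z, f (fun i => z (Fin.castLE h i)) ∂γ := by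
  rw [marginal, integral_map (measurable_pi_lambda _ fun i =>
    measurable_pi_apply (Fin.castLE h i)).aemeasurable hf.aestronglyMeasurable]

lemma integral_perm {N : ℕ} {γ : Measure (Fin N → X)} (hγ : γ ∈ PsymSet N)
    (σ : Equiv.Perm (Fin N)) {f : (Fin N → X) → ℝ} (hf : Measurable f) :
    ∫ z, f (fun i => z (σ i)) ∂γ = ∫ z, f z ∂γ := by
  conv_rhs => rw [← psym_map hγ σ]
  rw [integral_map (measurable_pmap σ).aemeasurable hf.aestronglyMeasurable]

lemma exists_perm_two {n : ℕ} {a b c d : Fin n} (hab : a ≠ b) (hcd : c ≠ d) :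
    ∃ σ : Equiv.Perm (Fin n), σ a = c ∧ σ b = d := by
  have h1 : (Equiv.swap a c) a = c := Equiv.swap_apply_left a c
  have h2 : (Equiv.swap a c) b ≠ c := by
    intro h
    have hba : b = a := (Equiv.swap a c).injective (h.trans h1.symm)
    exact hab hba.symm
  refine ⟨(Equiv.swap a c).trans (Equiv.swap d ((Equiv.swap a c) b)), ?_, ?_⟩
  · simp only [Equiv.trans_apply, h1]
    exact Equiv.swap_apply_of_ne_of_ne hcd (Ne.symm h2)
  · simp only [Equiv.trans_apply]
    exact Equiv.swap_apply_right _ _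

lemma integrable_of_bdd {α : Type*} [MeasurableSpace α] {μ : Measure α} [IsFiniteMeasure μ]
    {f : α → ℝ} {C : ℝ} (hf : Measurable f) (h : ∀ a, |f a| ≤ C) : Integrable f μ :=
  ⟨hf.aestronglyMeasurable, HasFiniteIntegral.of_bounded (ae_of_all _ fun a => by
    simpa using h a)⟩

set_option maxHeartbeats 1000000 in
lemma core {N : ℕ} (hN : 2 ≤ N) (γ : Measure (Fin N → X)) (hγ : γ ∈ PsymSet N)
    (u : X → ℝ) (hu : Measurable u) (h0 : ∀ y, 0 ≤ u y) (h1 : ∀ y, u y ≤ 1)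
    (m : ℝ) (i0 i1 : Fin N) (hne : i0 ≠ i1) :
    (-(m^2) ≤ (N:ℝ)*((N:ℝ)-1)*(∫ z, u (z i0) * u (z i1) ∂γ)
        + (1-2*m)*((N:ℝ)*(∫ z, u (z i0) ∂γ)))
    ∧ ((N:ℝ)*((N:ℝ)-1)*(∫ z, u (z i0) * u (z i1) ∂γ)
        + (1-2*m)*((N:ℝ)*(∫ z, u (z i0) ∂γ)) = -(m^2) →
        ∀ᵐ z ∂γ, (∀ i, u (z i)^2 = u (z i)) ∧ (∑ i, u (z i)) = m)
    ∧ ((∀ᵐ z ∂γ, (∀ i, u (z i)^2 = u (z i)) ∧ (∑ i, u (z i)) = m) →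
        (N:ℝ)*((N:ℝ)-1)*(∫ z, u (z i0) * u (z i1) ∂γ)
          + (1-2*m)*((N:ℝ)*(∫ z, u (z i0) ∂γ)) = -(m^2)) := by
  haveI : IsProbabilityMeasure γ := hγ.1
  have hNR : (2:ℝ) ≤ (N:ℝ) := by exact_mod_cast hN
  have hui : ∀ i : Fin N, Measurable fun z : Fin N → X => u (z i) :=
    fun i => hu.comp (measurable_pi_apply i)
  have habs : ∀ y, |u y| ≤ 1 := fun y => abs_le.2 ⟨by linarith [h0 y], h1 y⟩
  have hint1 : ∀ i, Integrable (fun z => u (z i)) γ :=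
    fun i => integrable_of_bdd (hui i) (fun z => habs _)
  have hintsq : ∀ i, Integrable (fun z => u (z i)^2) γ := fun i =>
    integrable_of_bdd (C := 1) ((hui i).pow_const 2) (fun z => by
      rw [abs_pow]
      calc |u (z i)|^2 ≤ 1^2 := pow_le_pow_left₀ (abs_nonneg _) (habs _) 2
        _ = 1 := one_pow 2)
  have hint2 : ∀ i j, Integrable (fun z => u (z i) * u (z j)) γ := fun i j =>
    integrable_of_bdd (C := 1) ((hui i).mul (hui j)) (fun z => by
      rw [abs_mul]
      exact mul_le_one₀ (habs _) (abs_nonneg _) (habs _))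
  have hTm : Measurable fun z : Fin N → X => ∑ i, u (z i) :=
    Finset.measurable_sum _ fun i _ => hui i
  have hTb : ∀ z : Fin N → X, |∑ i, u (z i)| ≤ (N:ℝ) := fun z => by
    calc |∑ i, u (z i)| ≤ ∑ i, |u (z i)| := Finset.abs_sum_le_sum_abs _ _
      _ ≤ ∑ _i : Fin N, (1:ℝ) := Finset.sum_le_sum fun i _ => habs _
      _ = (N:ℝ) := by simp
  have hintT : Integrable (fun z => ∑ i, u (z i)) γ := integrable_of_bdd hTm hTb
  have hintT2 : Integrable (fun z => (∑ i, u (z i))^2) γ :=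
    integrable_of_bdd (C := (N:ℝ)^2) (hTm.pow_const 2) (fun z => by
      rw [abs_pow]
      exact pow_le_pow_left₀ (abs_nonneg _) (hTb z) 2)
  -- exchangeability
  have exch1 : ∀ i : Fin N, ∫ z, u (z i) ∂γ = ∫ z, u (z i0) ∂γ := by
    intro i
    have h := integral_perm hγ (Equiv.swap i0 i) (f := fun z => u (z i0)) (hui i0)
    simpa [Equiv.swap_apply_left] using h
  have exchsq : ∀ i : Fin N, ∫ z, u (z i)^2 ∂γ = ∫ z, u (z i0)^2 ∂γ := by
    intro i
    have h := integral_perm hγ (Equiv.swap i0 i) (f := fun z => u (z i0)^2)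
      ((hui i0).pow_const 2)
    simpa [Equiv.swap_apply_left] using h
  have exch2 : ∀ i j : Fin N, i ≠ j →
      ∫ z, u (z i) * u (z j) ∂γ = ∫ z, u (z i0) * u (z i1) ∂γ := by
    intro i j hij
    obtain ⟨σ, hσ0, hσ1⟩ := exists_perm_two hne hij
    have h := integral_perm hγ σ (f := fun z => u (z i0) * u (z i1)) ((hui i0).mul (hui i1))
    simpa [hσ0, hσ1] using h
  set p := ∫ z, u (z i0) ∂γ with hp
  set S := ∫ z, u (z i0)^2 ∂γ with hS
  set Q := ∫ z, u (z i0) * u (z i1) ∂γ with hQ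
  set IT := ∫ z, (∑ i, u (z i)) ∂γ with hIT
  set IT2 := ∫ z, (∑ i, u (z i))^2 ∂γ with hIT2
  have idT : IT = (N:ℝ) * p := by
    rw [hIT, integral_finset_sum _ (fun i _ => hint1 i)]
    simp only [exch1]
    simp [mul_comm]
  have idT2 : IT2 = (N:ℝ) * S + (N:ℝ)*((N:ℝ)-1) * Q := by
    have expand : ∀ z : Fin N → X, (∑ i, u (z i))^2 = ∑ i, ∑ j, u (z i) * u (z j) := by
      intro z
      rw [sq, Finset.sum_mul_sum]
    rw [hIT2]
    calc ∫ z, (∑ i, u (z i))^2 ∂γ = ∫ z, ∑ i, ∑ j, u (z i) * u (z j) ∂γ :=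
          integral_congr_ae (ae_of_all _ fun z => expand z)
      _ = ∑ i, ∫ z, ∑ j, u (z i) * u (z j) ∂γ :=
          integral_finset_sum _ (fun i _ => integrable_finset_sum _ fun j _ => hint2 i j)
      _ = ∑ i : Fin N, (S + ((N:ℝ)-1) * Q) := by
          refine Finset.sum_congr rfl (fun i _ => ?_)
          rw [integral_finset_sum _ (fun j _ => hint2 i j)]
          rw [← Finset.add_sum_erase _ _ (Finset.mem_univ i)]
          have hii : ∫ z, u (z i) * u (z i) ∂γ = S := by
            rw [← exchsq i]
            exact integral_congr_ae (ae_of_all _ fun z => (pow_two (u (z i))).symm)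
          have hrest : ∑ j ∈ Finset.univ.erase i, ∫ z, u (z i) * u (z j) ∂γ
              = ((N:ℝ)-1) * Q := by
            rw [Finset.sum_congr rfl (fun j hj => exch2 i j (Finset.ne_of_mem_erase hj).symm)]
            rw [Finset.sum_const, Finset.card_erase_of_mem (Finset.mem_univ i),
              Finset.card_univ, Fintype.card_fin, nsmul_eq_mul]
            congr 1
            have h1N : (1:ℕ) ≤ N := by omega
            push_cast [Nat.cast_sub h1N]
            ring
          rw [hii, hrest]
      _ = (N:ℝ) * S + (N:ℝ)*((N:ℝ)-1) * Q := by
          rw [Finset.sum_const, Finset.card_univ, Fintype.card_fin, nsmul_eq_mul]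
          ring
  have hSp : S ≤ p := by
    refine integral_mono (hintsq i0) (hint1 i0) (fun z => ?_)
    nlinarith [h0 (z i0), h1 (z i0)]
  have expand_sq : ∀ c : ℝ, ∫ z, ((∑ i, u (z i)) - c)^2 ∂γ = IT2 - 2*c*IT + c^2 := by
    intro c
    have hi1 : Integrable (fun z => (∑ i, u (z i))^2 - 2*c*(∑ i, u (z i))) γ :=
      hintT2.sub (hintT.const_mul _)
    have hfun : ∀ z : Fin N → X, ((∑ i, u (z i)) - c)^2
        = ((∑ i, u (z i))^2 - 2*c*(∑ i, u (z i))) + c^2 := fun z => by ring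
    rw [integral_congr_ae (ae_of_all _ hfun), integral_add hi1 (integrable_const _),
      integral_sub hintT2 (hintT.const_mul _), integral_const_mul, integral_const]
    simp only [measure_univ, ENNReal.toReal_one, smul_eq_mul, one_mul, probReal_univ]
    rfl
  have hvar : IT^2 ≤ IT2 := by
    have hnn : (0:ℝ) ≤ ∫ z, ((∑ i, u (z i)) - IT)^2 ∂γ :=
      integral_nonneg fun z => sq_nonneg _
    rw [expand_sq IT] at hnn
    nlinarith
  have hE : (N:ℝ)*((N:ℝ)-1)*Q + (1-2*m)*((N:ℝ)*p) = IT2 - (N:ℝ)*S + (1-2*m)*IT := by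
    rw [idT2, ← idT]
    ring
  have hNS : (N:ℝ)*S ≤ IT := by
    rw [idT]
    nlinarith
  refine ⟨?_, ?_, ?_⟩
  · rw [hE]
    nlinarith [sq_nonneg (IT - m)]
  · intro heq
    rw [hE] at heq
    have hA : IT2 - IT^2 = 0 := by nlinarith [sq_nonneg (IT - m)]
    have hC : (IT - m)^2 = 0 := by nlinarith [sq_nonneg (IT - m)]
    have hITm : IT = m := by
      have h2 := pow_eq_zero_iff (n := 2) (by norm_num) |>.1 hC
      linarith [sub_eq_zero.1 h2]
    have hSp' : S = p := by
      have hNpos : (0:ℝ) < N := by linarith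
      have hB : (N:ℝ)*S = (N:ℝ)*p := by nlinarith [sq_nonneg (IT - m)]
      exact mul_left_cancel₀ hNpos.ne' hB
    have aeu : ∀ᵐ z ∂γ, ∀ i, u (z i)^2 = u (z i) := by
      rw [ae_all_iff]
      intro i
      have hzero : ∫ z, (u (z i) - u (z i)^2) ∂γ = 0 := by
        rw [integral_sub (hint1 i) (hintsq i), exch1 i, exchsq i, hSp']
        ring
      have hnn : (0 : (Fin N → X) → ℝ) ≤ᵐ[γ] (fun z => u (z i) - u (z i)^2) :=
        ae_of_all _ (fun z => by
          have a := h0 (z i); have b := h1 (z i)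
          simp only [Pi.zero_apply]
          nlinarith)
      have hae0 := (integral_eq_zero_iff_of_nonneg_ae hnn
        ((hint1 i).sub (hintsq i))).1 hzero
      filter_upwards [hae0] with z hz
      have hz' : u (z i) - u (z i)^2 = 0 := hz
      linarith
    have aeT : ∀ᵐ z ∂γ, (∑ i, u (z i)) = m := by
      have hzero : ∫ z, ((∑ i, u (z i)) - m)^2 ∂γ = 0 := by
        rw [expand_sq m]
        nlinarith
      have hnn : (0 : (Fin N → X) → ℝ) ≤ᵐ[γ] (fun z => ((∑ i, u (z i)) - m)^2) :=
        ae_of_all _ (fun z => by simp only [Pi.zero_apply]; positivity)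
      have hintsm : Integrable (fun z => ((∑ i, u (z i)) - m)^2) γ := by
        have hi1 : Integrable (fun z => (∑ i, u (z i))^2 - 2*m*(∑ i, u (z i))) γ :=
          hintT2.sub (hintT.const_mul _)
        have hfun : ∀ z : Fin N → X, ((∑ i, u (z i)) - m)^2
            = ((∑ i, u (z i))^2 - 2*m*(∑ i, u (z i))) + m^2 := fun z => by ring
        exact (Integrable.congr (hi1.add (integrable_const _))
          (ae_of_all _ fun z => (hfun z).symm))
      have hae0 := (integral_eq_zero_iff_of_nonneg_ae hnn hintsm).1 hzero
      filter_upwards [hae0] with z hz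
      have hz' : ((∑ i, u (z i)) - m)^2 = 0 := hz
      have h2 := pow_eq_zero_iff (n := 2) (by norm_num) |>.1 hz'
      linarith [sub_eq_zero.1 h2]
    filter_upwards [aeu, aeT] with z hz1 hz2
    exact ⟨hz1, hz2⟩
  · intro hae
    have hITm : IT = m := by
      rw [hIT, integral_congr_ae ((hae.mono) fun z hz => hz.2)]
      simp
    have hIT2m : IT2 = m^2 := by
      rw [hIT2, integral_congr_ae (μ := γ) (g := fun _ => m^2)
        ((hae.mono) fun z hz => by rw [hz.2])]
      simp
    have hSp' : S = p := by
      rw [hS, hp]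
      exact integral_congr_ae ((hae.mono) fun z hz => hz.1 i0)
    rw [hE, hSp', ← idT, hITm, hIT2m]
    ring
open Finset in
lemma exists_perm_of_counts {Y : Type*} [DecidableEq Y] {N : ℕ} (x z : Fin N → Y)
    (h : ∀ c : Y, (univ.filter fun i => z i = c).card = (univ.filter fun i => x i = c).card) :
    ∃ σ : Equiv.Perm (Fin N), z = fun i => x (σ i) := by
  have e : ∀ c : Y, {i // i ∈ univ.filter fun i => z i = c}
      ≃ {j // j ∈ univ.filter fun j => x j = c} :=
    fun c => Fintype.equivOfCardEq (by simp only [Fintype.card_coe]; exact h c)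
  have hmem : ∀ i : Fin N, i ∈ univ.filter fun i' => z i' = z i := fun i => by simp
  let g : Fin N → Fin N := fun i => (e (z i) ⟨i, hmem i⟩).1
  have hg : ∀ i, x (g i) = z i := fun i => by
    exact (mem_filter.1 (e (z i) ⟨i, hmem i⟩).2).2
  have congr_e : ∀ (a b : Y) (_ : a = b) (i : Fin N)
      (hia : i ∈ univ.filter fun i' => z i' = a) (hib : i ∈ univ.filter fun i' => z i' = b),
      ((e a ⟨i, hia⟩).1 = (e b ⟨i, hib⟩).1) := by
    intro a b hab i hia hib
    subst hab
    rfl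
  have hginj : Function.Injective g := by
    intro i j hij
    have hzz : z i = z j := by rw [← hg i, ← hg j, hij]
    have hjm : j ∈ univ.filter fun i' => z i' = z i := by simp [hzz]
    have h2 : (e (z i) ⟨j, hjm⟩).1 = g j := congr_e (z i) (z j) hzz j hjm (hmem j)
    have h3 : e (z i) ⟨i, hmem i⟩ = e (z i) ⟨j, hjm⟩ :=
      Subtype.ext (by rw [h2]; exact hij)
    have h4 := (e (z i)).injective h3
    simpa using congrArg Subtype.val h4
  have hgbij : Function.Bijective g := Finite.injective_iff_bijective.1 hginj
  refine ⟨Equiv.ofBijective g hgbij, ?_⟩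
  funext i
  exact (hg i).symm

open Finset in
lemma sym_supported_eq {N : ℕ}
    (hsing : ∀ p : Fin N → X, MeasurableSet {p}) (x : Fin N → X)
    (γ γ' : Measure (Fin N → X)) (hγ : γ ∈ PsymSet N) (hγ' : γ' ∈ PsymSet N)
    (hs : γ {z | ∃ σ : Equiv.Perm (Fin N), z = fun i => x (σ i)}ᶜ = 0)
    (hs' : γ' {z | ∃ σ : Equiv.Perm (Fin N), z = fun i => x (σ i)}ᶜ = 0) : γ = γ' := by
  classical
  have key : ∀ (ρ : Measure (Fin N → X)), ρ ∈ PsymSet N →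
      ∀ (σ : Equiv.Perm (Fin N)) (s : Fin N → X), ρ {fun i => s (σ i)} = ρ {s} := by
    intro ρ hρ σ s
    conv_lhs => rw [← psym_map hρ σ]
    rw [Measure.map_apply (measurable_pmap σ) (hsing _)]
    congr 1
    ext z
    simp only [Set.mem_preimage, Set.mem_singleton_iff]
    constructor
    · intro hzs
      funext j
      have h := congrFun hzs (σ.symm j)
      simpa using h
    · intro hzs
      subst hzs
      rfl
  set PF : Finset (Fin N → X) :=
    Finset.image (fun σ : Equiv.Perm (Fin N) => fun i => x (σ i)) univ with hPF
  have hPFset : {z : Fin N → X | ∃ σ : Equiv.Perm (Fin N), z = fun i => x (σ i)} = ↑PF := by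
    ext z
    simp only [Set.mem_setOf_eq, hPF, coe_image, coe_univ, Set.image_univ, Set.mem_range]
    exact ⟨fun ⟨σ, h⟩ => ⟨σ, h.symm⟩, fun ⟨σ, h⟩ => ⟨σ, h.symm⟩⟩
  have hPFx : x ∈ PF := by
    refine mem_image.2 ⟨1, mem_univ 1, ?_⟩
    funext i
    rfl
  have hmeasPF : MeasurableSet (↑PF : Set (Fin N → X)) := by
    rw [← Set.biUnion_of_singleton (↑PF : Set (Fin N → X))]
    exact MeasurableSet.biUnion PF.countable_toSet (fun p _ => hsing p)
  have hmass : ∀ (ρ : Measure (Fin N → X)), ρ ∈ PsymSet N →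
      ρ {z | ∃ σ : Equiv.Perm (Fin N), z = fun i => x (σ i)}ᶜ = 0 →
      ∀ B : Set (Fin N → X), MeasurableSet B →
      ρ B = ((PF.filter (fun p => p ∈ B)).card : ℝ≥0∞) * ρ {x} := by
    intro ρ hρ hρs B _
    have hsingval : ∀ p ∈ PF, ρ {p} = ρ {x} := by
      intro p hp
      obtain ⟨σ, _, rfl⟩ := mem_image.1 hp
      exact key ρ hρ σ x
    have hdiff : ρ (B \ ↑PF) = 0 := by
      refine le_antisymm (le_trans (measure_mono ?_) hρs.le) zero_le
      rw [hPFset]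
      exact fun z hz => hz.2
    have hBsplit : ρ B = ρ (B ∩ ↑PF) := by
      rw [← measure_inter_add_diff B hmeasPF, hdiff, add_zero]
    rw [hBsplit]
    have hBP : B ∩ ↑PF = ↑(PF.filter (fun p => p ∈ B)) := by
      ext z
      simp [and_comm]
    rw [hBP]
    have hsum : ρ ↑(PF.filter fun p => p ∈ B) = ∑ p ∈ PF.filter (fun p => p ∈ B), ρ {p} := by
      rw [← measure_biUnion_finset ?_ (fun p _ => hsing p)]
      · congr 1
        ext z
        simp
      · intro p _ q _ hpq
        simp [Function.onFun, hpq]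
    rw [hsum, Finset.sum_congr rfl (fun p hp => hsingval p (mem_filter.1 hp).1),
      Finset.sum_const, nsmul_eq_mul]
  have htot : ∀ (ρ : Measure (Fin N → X)), ρ ∈ PsymSet N →
      ρ {z | ∃ σ : Equiv.Perm (Fin N), z = fun i => x (σ i)}ᶜ = 0 →
      (PF.card : ℝ≥0∞) * ρ {x} = 1 := by
    intro ρ hρ hρs
    have h := hmass ρ hρ hρs Set.univ MeasurableSet.univ
    haveI : IsProbabilityMeasure ρ := hρ.1
    rw [measure_univ] at h
    simp only [Set.mem_univ, Finset.filter_true] at h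
    exact h.symm
  have hcard0 : (PF.card : ℝ≥0∞) ≠ 0 := by
    simp only [ne_eq, Nat.cast_eq_zero]
    exact Finset.card_ne_zero_of_mem hPFx
  have hcardt : (PF.card : ℝ≥0∞) ≠ ⊤ := natCast_ne_top _
  have hx : γ {x} = γ' {x} := by
    calc γ {x} = (PF.card : ℝ≥0∞)⁻¹ * ((PF.card : ℝ≥0∞) * γ {x}) := by
          rw [← mul_assoc, ENNReal.inv_mul_cancel hcard0 hcardt, one_mul]
      _ = (PF.card : ℝ≥0∞)⁻¹ * ((PF.card : ℝ≥0∞) * γ' {x}) := by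
          rw [htot γ hγ hs, htot γ' hγ' hs']
      _ = γ' {x} := by
          rw [← mul_assoc, ENNReal.inv_mul_cancel hcard0 hcardt, one_mul]
  ext B hB
  rw [hmass γ hγ hs B hB, hmass γ' hγ' hs' B hB, hx]
set_option maxHeartbeats 2000000 in
/-- For a Polish space `X` and `N ≥ k ≥ 2`, every extreme point
`μ ∈ E_{N,k}` of `𝒫_{N-rep}(X^k)` is exposed: some bounded continuous `φ` satisfies
`∫ φ dμ < ∫ φ dν` for all `ν ∈ 𝒫_{N-rep}(X^k)` with `ν ≠ μ`. -/
theorem extreme_points_are_exposed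
    {X : Type*} [MeasurableSpace X] [TopologicalSpace X] [PolishSpace X] [BorelSpace X]
    {k N : ℕ} (hk : 2 ≤ k) (hkN : k ≤ N)
    (μ : Measure (Fin k → X)) (hμ : μ ∈ ENk (X := X) hkN) :
    ∃ φ : BoundedContinuousFunction (Fin k → X) ℝ,
      ∀ ν ∈ NRep (X := X) hkN, ν ≠ μ → ∫ y, φ y ∂μ < ∫ y, φ y ∂ν := by
  classical
  obtain ⟨x, hxμ⟩ := hμ
  letI := TopologicalSpace.upgradeIsCompletelyMetrizable X
  have hN2 : 2 ≤ N := hk.trans hkN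
  have hNR : (2:ℝ) ≤ (N:ℝ) := by exact_mod_cast hN2
  -- measurable singletons in the product
  have hsing : ∀ p : Fin N → X, MeasurableSet ({p} : Set (Fin N → X)) := by
    intro p
    have hset : ({p} : Set (Fin N → X)) = ⋂ i, (fun z : Fin N → X => z i) ⁻¹' {p i} := by
      ext z
      simp [funext_iff]
    rw [hset]
    exact MeasurableSet.iInter fun i =>
      (measurable_pi_apply i) (measurableSet_singleton (p i))
  -- separation radius
  obtain ⟨r, hr, hsep⟩ : ∃ r : ℝ, 0 < r ∧ ∀ i j : Fin N, x i ≠ x j → r ≤ dist (x i) (x j) := by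
    by_cases hne : (Finset.univ.filter (fun p : Fin N × Fin N => x p.1 ≠ x p.2)).Nonempty
    · refine ⟨(Finset.univ.filter (fun p : Fin N × Fin N => x p.1 ≠ x p.2)).inf' hne
        (fun p => dist (x p.1) (x p.2)), ?_, ?_⟩
      · rw [Finset.lt_inf'_iff]
        intro p hp
        exact dist_pos.2 (Finset.mem_filter.1 hp).2
      · intro i j hij
        exact Finset.inf'_le (fun p : Fin N × Fin N => dist (x p.1) (x p.2))
          (Finset.mem_filter.2 ⟨Finset.mem_univ (i, j), hij⟩)
    · exact ⟨1, one_pos, fun i j hij =>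
        absurd (Finset.mem_filter.2 ⟨Finset.mem_univ (i,j), hij⟩) (fun hmem => hne ⟨_, hmem⟩)⟩
  set A : Finset X := Finset.image x Finset.univ with hA
  set mm : X → ℕ := fun a => (Finset.univ.filter fun i => x i = a).card with hmm
  set u : X → X → ℝ := fun a y => max 0 (1 - dist y a / r) with hu
  have hu0 : ∀ a y, 0 ≤ u a y := fun a y => le_max_left _ _
  have hu1 : ∀ a y, u a y ≤ 1 := fun a y =>
    max_le zero_le_one (by
      have h : 0 ≤ dist y a / r := div_nonneg dist_nonneg hr.le
      linarith)
  have hucont : ∀ a, Continuous (u a) := fun a =>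
    continuous_const.max (continuous_const.sub ((continuous_id.dist continuous_const).div_const r))
  have humeas : ∀ a, Measurable (u a) := fun a => (hucont a).measurable
  have hu_one : ∀ a y, u a y = 1 ↔ y = a := by
    intro a y
    constructor
    · intro h
      have h' : max 0 (1 - dist y a / r) = 1 := h
      rcases max_choice 0 (1 - dist y a / r) with hc | hc
      · rw [hc] at h'; norm_num at h'
      · rw [hc] at h'
        have hq : dist y a / r = 0 := by linarith
        have hd : dist y a = 0 := by
          rcases div_eq_zero_iff.1 hq with h' | h'
          · exact h'
          · exact absurd h' hr.ne'
        exact dist_eq_zero.1 hd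
    · rintro rfl
      simp [hu, dist_self]
  have hu_atom : ∀ a, a ∈ A → ∀ j, u a (x j) = if x j = a then 1 else 0 := by
    intro a ha j
    by_cases h : x j = a
    · rw [if_pos h]; exact (hu_one a (x j)).2 h
    · rw [if_neg h]
      obtain ⟨i, _, rfl⟩ := Finset.mem_image.1 ha
      have hd : r ≤ dist (x j) (x i) := hsep j i h
      have hle : 1 - dist (x j) (x i) / r ≤ 0 := by
        have h1 : (1:ℝ) ≤ dist (x j) (x i) / r := (one_le_div hr).2 hd
        linarith
      exact max_eq_left hle
  -- indices
  have h0k : 0 < k := by omega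
  have h1k : 1 < k := by omega
  set j0 : Fin N := Fin.castLE hkN ⟨0, h0k⟩ with hj0
  set j1 : Fin N := Fin.castLE hkN ⟨1, h1k⟩ with hj1
  have hj01 : j0 ≠ j1 := by
    simp only [hj0, hj1, ne_eq, Fin.ext_iff, Fin.castLE]
    norm_num
  -- the exposing function
  set ψ : (Fin k → X) → ℝ := fun y => ∑ a ∈ A,
    ((N:ℝ)*((N:ℝ)-1) * (u a (y ⟨0, h0k⟩) * u a (y ⟨1, h1k⟩))
      + (1-2*(mm a : ℝ))*((N:ℝ) * (u a (y ⟨0, h0k⟩)))) with hψ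
  have hψcont : Continuous ψ := by
    refine continuous_finset_sum _ (fun a _ => ?_)
    have hc0 : Continuous fun y : Fin k → X => u a (y ⟨0, h0k⟩) :=
      (hucont a).comp (continuous_apply _)
    have hc1 : Continuous fun y : Fin k → X => u a (y ⟨1, h1k⟩) :=
      (hucont a).comp (continuous_apply _)
    exact (continuous_const.mul (hc0.mul hc1)).add (continuous_const.mul (continuous_const.mul hc0))
  have hNN : (0:ℝ) ≤ (N:ℝ)*((N:ℝ)-1) := by nlinarith
  have habs : ∀ a y, |u a y| ≤ 1 := fun a y => abs_le.2 ⟨by linarith [hu0 a y], hu1 a y⟩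
  have hψbdd : ∀ y, ‖ψ y‖ ≤ ∑ a ∈ A, ((N:ℝ)*((N:ℝ)-1) + |1-2*(mm a:ℝ)| * (N:ℝ)) := by
    intro y
    rw [Real.norm_eq_abs, hψ]
    refine (Finset.abs_sum_le_sum_abs _ _).trans (Finset.sum_le_sum fun a _ => ?_)
    refine (abs_add_le _ _).trans (add_le_add ?_ ?_)
    · rw [abs_mul]
      have hprod : |u a (y ⟨0, h0k⟩) * u a (y ⟨1, h1k⟩)| ≤ 1 := by
        rw [abs_mul]
        exact mul_le_one₀ (habs _ _) (abs_nonneg _) (habs _ _)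
      calc |(N:ℝ)*((N:ℝ)-1)| * |u a (y ⟨0, h0k⟩) * u a (y ⟨1, h1k⟩)|
          ≤ |(N:ℝ)*((N:ℝ)-1)| * 1 := mul_le_mul_of_nonneg_left hprod (abs_nonneg _)
        _ = (N:ℝ)*((N:ℝ)-1) := by rw [mul_one, abs_of_nonneg hNN]
    · rw [abs_mul]
      have hN0 : (0:ℝ) ≤ (N:ℝ) := by linarith
      have h2 : |(N:ℝ) * u a (y ⟨0, h0k⟩)| ≤ (N:ℝ) := by
        rw [abs_mul, abs_of_nonneg hN0]
        calc (N:ℝ) * |u a (y ⟨0, h0k⟩)| ≤ (N:ℝ) * 1 :=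
              mul_le_mul_of_nonneg_left (habs _ _) hN0
          _ = (N:ℝ) := mul_one _
      exact mul_le_mul_of_nonneg_left h2 (abs_nonneg _)
  refine ⟨BoundedContinuousFunction.ofNormedAddCommGroup ψ hψcont _ hψbdd, ?_⟩
  intro ν hν hνμ
  simp only [BoundedContinuousFunction.coe_ofNormedAddCommGroup]
  obtain ⟨γ, hγmem, rfl⟩ := hν
  haveI : IsProbabilityMeasure γ := hγmem.1
  set γ0 : Measure (Fin N → X) := symmetrize N (Measure.dirac x) with hγ0
  have hγ0mem : γ0 ∈ PsymSet N := symmetrize_mem_psym _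
  haveI : IsProbabilityMeasure γ0 := hγ0mem.1
  -- integrability over any probability measure
  have hbmeas : ∀ (a : X) (i : Fin N), Measurable (fun z : Fin N → X => u a (z i)) :=
    fun a i => (humeas a).comp (measurable_pi_apply i)
  -- reduction of the integral of ψ over a marginal
  have hred : ∀ γ' : Measure (Fin N → X), IsProbabilityMeasure γ' →
      ∫ y, ψ y ∂(marginal hkN γ') = ∑ a ∈ A,
        ((N:ℝ)*((N:ℝ)-1) * (∫ z, u a (z j0) * u a (z j1) ∂γ')
          + (1-2*(mm a:ℝ))*((N:ℝ) * (∫ z, u a (z j0) ∂γ'))) := by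
    intro γ' hP
    have hint1 : ∀ a, Integrable (fun z : Fin N → X => u a (z j0)) γ' :=
      fun a => integrable_of_bdd (hbmeas a j0) (fun z => habs a _)
    have hint2 : ∀ a, Integrable (fun z : Fin N → X => u a (z j0) * u a (z j1)) γ' :=
      fun a => integrable_of_bdd (C := 1) ((hbmeas a j0).mul (hbmeas a j1)) (fun z => by
        rw [abs_mul]
        exact mul_le_one₀ (habs a _) (abs_nonneg _) (habs a _))
    rw [integral_marginal hkN γ' hψcont.measurable]
    have hpt : (fun z : Fin N → X => ψ (fun i => z (Fin.castLE hkN i))) = fun z => ∑ a ∈ A,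
        ((N:ℝ)*((N:ℝ)-1) * (u a (z j0) * u a (z j1))
          + (1-2*(mm a:ℝ))*((N:ℝ) * (u a (z j0)))) := rfl
    have hintterm : ∀ a ∈ A, Integrable (fun z : Fin N → X =>
        (N:ℝ)*((N:ℝ)-1) * (u a (z j0) * u a (z j1))
          + (1-2*(mm a:ℝ))*((N:ℝ) * (u a (z j0)))) γ' := by
      intro a _
      exact ((hint2 a).const_mul _).add (((hint1 a).const_mul _).const_mul _)
    rw [hpt, integral_finset_sum _ hintterm]
    refine Finset.sum_congr rfl fun a _ => ?_
    have hI1 : Integrable (fun z : Fin N → X =>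
        (N:ℝ)*((N:ℝ)-1) * (u a (z j0) * u a (z j1))) γ' := (hint2 a).const_mul _
    have hI2 : Integrable (fun z : Fin N → X =>
        (1-2*(mm a:ℝ))*((N:ℝ) * (u a (z j0)))) γ' := ((hint1 a).const_mul _).const_mul _
    rw [integral_add hI1 hI2, integral_const_mul, integral_const_mul, integral_const_mul]
  -- support of γ0
  have hSmeas : MeasurableSet {z : Fin N → X | ∃ σ : Equiv.Perm (Fin N), z = fun i => x (σ i)} := by
    have hset : {z : Fin N → X | ∃ σ : Equiv.Perm (Fin N), z = fun i => x (σ i)}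
        = ⋃ σ : Equiv.Perm (Fin N), {fun i => x (σ i)} := by
      ext z
      simp only [Set.mem_setOf_eq, Set.mem_iUnion, Set.mem_singleton_iff]
    rw [hset]
    exact MeasurableSet.iUnion fun σ => hsing _
  have hγ0supp : γ0 {z : Fin N → X | ∃ σ : Equiv.Perm (Fin N), z = fun i => x (σ i)}ᶜ = 0 := by
    rw [hγ0, symmetrize, Measure.smul_apply, Measure.finset_sum_apply]
    have hterm : ∀ σ : Equiv.Perm (Fin N),
        (Measure.dirac x).map (fun z i => z (σ i))
          {z : Fin N → X | ∃ σ : Equiv.Perm (Fin N), z = fun i => x (σ i)}ᶜ = 0 := by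
      intro σ
      have hnot : (fun i => x (σ i)) ∉ {z : Fin N → X | ∃ σ' : Equiv.Perm (Fin N),
          z = fun i => x (σ' i)}ᶜ := fun hmem => hmem ⟨σ, rfl⟩
      rw [Measure.map_dirac' (measurable_pmap σ), Measure.dirac_apply' _ hSmeas.compl,
        Set.indicator_of_notMem hnot]
    simp only [hterm, Finset.sum_const_zero, smul_eq_mul, mul_zero]
  have horb : ∀ᵐ z ∂γ0, ∃ σ : Equiv.Perm (Fin N), z = fun i => x (σ i) := by
    rw [ae_iff]
    rw [show {z : Fin N → X | ¬ ∃ σ : Equiv.Perm (Fin N), z = fun i => x (σ i)}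
      = {z : Fin N → X | ∃ σ : Equiv.Perm (Fin N), z = fun i => x (σ i)}ᶜ from rfl]
    exact hγ0supp
  have hγ0ae : ∀ a ∈ A, ∀ᵐ z ∂γ0,
      (∀ i, u a (z i)^2 = u a (z i)) ∧ (∑ i, u a (z i)) = (mm a : ℝ) := by
    intro a ha
    filter_upwards [horb] with z hz
    obtain ⟨σ, rfl⟩ := hz
    constructor
    · intro i
      rw [hu_atom a ha (σ i)]
      split_ifs <;> norm_num
    · calc ∑ i, u a (x (σ i)) = ∑ i, (if x (σ i) = a then (1:ℝ) else 0) :=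
            Finset.sum_congr rfl (fun i _ => hu_atom a ha (σ i))
        _ = ∑ i, (if x i = a then (1:ℝ) else 0) :=
            Equiv.sum_comp σ (fun i => if x i = a then (1:ℝ) else 0)
        _ = (mm a : ℝ) := by
            rw [Finset.sum_boole, hmm]
  have hμval : ∫ y, ψ y ∂μ = ∑ a ∈ A, -((mm a:ℝ)^2) := by
    rw [hxμ, hred γ0 inferInstance]
    exact Finset.sum_congr rfl fun a ha =>
      (core hN2 γ0 hγ0mem (u a) (humeas a) (hu0 a) (hu1 a) (mm a) j0 j1 hj01).2.2 (hγ0ae a ha)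
  have hlow : ∀ a ∈ A, -((mm a:ℝ)^2) ≤
      (N:ℝ)*((N:ℝ)-1) * (∫ z, u a (z j0) * u a (z j1) ∂γ)
        + (1-2*(mm a:ℝ))*((N:ℝ)*(∫ z, u a (z j0) ∂γ)) :=
    fun a _ => (core hN2 γ hγmem (u a) (humeas a) (hu0 a) (hu1 a) (mm a) j0 j1 hj01).1
  rw [hμval, hred γ inferInstance]
  rcases lt_or_eq_of_le (Finset.sum_le_sum hlow) with hlt | heqs
  · exact hlt
  exfalso
  apply hνμ
  -- per-atom equality
  have hEa : ∀ a ∈ A,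
      (N:ℝ)*((N:ℝ)-1) * (∫ z, u a (z j0) * u a (z j1) ∂γ)
        + (1-2*(mm a:ℝ))*((N:ℝ)*(∫ z, u a (z j0) ∂γ)) = -((mm a:ℝ)^2) :=
    fun a ha => ((Finset.sum_eq_sum_iff_of_le hlow).1 heqs a ha).symm
  have haeγ : ∀ a ∈ A, ∀ᵐ z ∂γ,
      (∀ i, u a (z i)^2 = u a (z i)) ∧ (∑ i, u a (z i)) = (mm a:ℝ) :=
    fun a ha => (core hN2 γ hγmem (u a) (humeas a) (hu0 a) (hu1 a) (mm a) j0 j1 hj01).2.1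
      (hEa a ha)
  have hall : ∀ᵐ z ∂γ, ∀ a ∈ (A : Set X),
      (∀ i, u a (z i)^2 = u a (z i)) ∧ (∑ i, u a (z i)) = (mm a:ℝ) :=
    (ae_ball_iff A.countable_toSet).2 (fun a ha => haeγ a ha)
  have hperm : ∀ᵐ z ∂γ, ∃ σ : Equiv.Perm (Fin N), z = fun i => x (σ i) := by
    filter_upwards [hall] with z hz
    -- u-values are indicators
    have hval : ∀ a ∈ A, ∀ i, u a (z i) = if z i = a then (1:ℝ) else 0 := by
      intro a ha i
      have hsq := (hz a ha).1 i
      have h01 : u a (z i) = 0 ∨ u a (z i) = 1 := by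
        have hfac : u a (z i) * (u a (z i) - 1) = 0 := by nlinarith
        rcases mul_eq_zero.1 hfac with h | h
        · exact Or.inl h
        · exact Or.inr (by linarith)
      by_cases hzi : z i = a
      · rw [if_pos hzi]; exact (hu_one a (z i)).2 hzi
      · rw [if_neg hzi]
        rcases h01 with h | h
        · exact h
        · exact absurd ((hu_one a (z i)).1 h) hzi
    have hcount : ∀ a ∈ A, (Finset.univ.filter fun i => z i = a).card = mm a := by
      intro a ha
      have hsum := (hz a ha).2
      rw [Finset.sum_congr rfl (fun i _ => hval a ha i), Finset.sum_boole] at hsum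
      exact_mod_cast hsum
    have hNsum : ∑ a ∈ A, mm a = N := by
      have hfib := Finset.card_eq_sum_card_fiberwise (f := x) (s := Finset.univ) (t := A)
        (fun i _ => Finset.mem_image_of_mem x (Finset.mem_univ i))
      simpa [hmm] using hfib.symm
    have hcover : ∀ i, z i ∈ A := by
      have hfib := Finset.card_eq_sum_card_fiberwise (f := z)
        (s := Finset.univ.filter fun i => z i ∈ A) (t := A)
        (fun i hi => (Finset.mem_filter.1 hi).2)
      have hfilter_eq : ∀ a ∈ A,
          ((Finset.univ.filter fun i => z i ∈ A).filter fun i => z i = a)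
            = Finset.univ.filter fun i => z i = a := by
        intro a ha
        ext i
        simp only [Finset.mem_filter, Finset.mem_univ, true_and]
        exact ⟨fun h => h.2, fun h => ⟨h ▸ ha, h⟩⟩
      have hcard : (Finset.univ.filter fun i => z i ∈ A).card = N := by
        rw [hfib]
        calc (∑ a ∈ A, ((Finset.univ.filter fun i => z i ∈ A).filter fun i => z i = a).card)
            = ∑ a ∈ A, mm a :=
              Finset.sum_congr rfl (fun a ha => by rw [hfilter_eq a ha]; exact hcount a ha)
          _ = N := hNsum
      have huniv : (Finset.univ.filter fun i => z i ∈ A) = Finset.univ :=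
        Finset.eq_univ_of_card _ (by rw [hcard]; simp)
      intro i
      have : i ∈ (Finset.univ.filter fun i => z i ∈ A) := by rw [huniv]; exact Finset.mem_univ i
      exact (Finset.mem_filter.1 this).2
    have hcounts : ∀ c : X, (Finset.univ.filter fun i => z i = c).card
        = (Finset.univ.filter fun i => x i = c).card := by
      intro c
      by_cases hc : c ∈ A
      · rw [hcount c hc, hmm]
      · have h1 : (Finset.univ.filter fun i => z i = c) = ∅ :=
          Finset.filter_eq_empty_iff.2 (fun {i} _ h => hc (h ▸ hcover i))
        have h2 : (Finset.univ.filter fun i => x i = c) = ∅ :=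
          Finset.filter_eq_empty_iff.2 (fun {i} _ h =>
            hc (h ▸ Finset.mem_image_of_mem x (Finset.mem_univ i)))
        rw [h1, h2]
    exact exists_perm_of_counts x z hcounts
  have hsupγ : γ {z : Fin N → X | ∃ σ : Equiv.Perm (Fin N), z = fun i => x (σ i)}ᶜ = 0 := by
    have := ae_iff.1 hperm
    rw [show {z : Fin N → X | ¬ ∃ σ : Equiv.Perm (Fin N), z = fun i => x (σ i)}
      = {z : Fin N → X | ∃ σ : Equiv.Perm (Fin N), z = fun i => x (σ i)}ᶜ from rfl] at this
    exact this
  have hγγ0 : γ = γ0 := sym_supported_eq hsing x γ γ0 hγmem hγ0mem hsupγ hγ0supp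
  rw [hγγ0]
  exact hxμ.symm

end FiniteDeFinetti
end
end

section
/- Let X be a Polish space and N ≥ k ≥ 2. The set E_{N,k} := { M_k S_N δ_{(x_1,…,x_N)} : (x_1,…,x_N) ∈ X^N } of extreme points of 𝒫_{N-rep}(X^k) is closed under narrow convergence: if μ^n ∈ E_{N,k} converge narrowly to μ ∈ 𝒫(X^k), then μ ∈ E_{N,k}. -/
open MeasureTheory Filter Topology ENNReal

noncomputable section

namespace FiniteDeFinetti

variable {X : Type*}

/-!
Every atom of `μⁿ = M_k S_N δ_{xⁿ}` has mass at least `1/N!`, and every coordinate `xⁿ_i` is the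
first coordinate of one of these atoms (permute `i` to the front). A narrowly convergent sequence
on a Polish space is tight, so a single compact `K ⊆ X^k` carries all atoms of all `μⁿ`. Hence
every `xⁿ` lies in the compact set `(π₁ K)^N`, a subsequence converges to some `x`, and by
continuity of `x ↦ M_k S_N δ_x` the limit `μ` equals `M_k S_N δ_x`.
-/

section Marginal

variable [MeasurableSpace X] {k N : ℕ} (h : k ≤ N)

lemma marginal_symmetrize_dirac (x : Fin N → X) :
    marginal h (symmetrize N (Measure.dirac x)) =
      (N.factorial : ℝ≥0∞)⁻¹ •
        ∑ σ : Equiv.Perm (Fin N), Measure.dirac (fun i => x (σ (Fin.castLE h i))) := by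
  have hproj : Measurable fun y : Fin N → X => fun i : Fin k => y (Fin.castLE h i) := by
    fun_prop
  have hperm (σ : Equiv.Perm (Fin N)) : Measurable fun y : Fin N → X => fun i => y (σ i) := by
    fun_prop
  rw [marginal, symmetrize, Measure.map_smul, Measure.map_finset_sum' hproj.aemeasurable]
  simp only [Measure.map_dirac' (hperm _), Measure.map_dirac' hproj]

lemma isProbabilityMeasure_marginal_symmetrize_dirac (x : Fin N → X) :
    IsProbabilityMeasure (marginal h (symmetrize N (Measure.dirac x))) := by
  constructor
  rw [marginal_symmetrize_dirac, Measure.smul_apply, Measure.finsetSum_apply]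
  simp only [measure_univ, Finset.sum_const, Finset.card_univ, Fintype.card_perm,
    Fintype.card_fin, nsmul_eq_mul, mul_one, smul_eq_mul]
  exact ENNReal.inv_mul_cancel (by exact_mod_cast N.factorial_ne_zero) (natCast_ne_top _)

lemma inv_factorial_le_marginal_symmetrize_dirac {x : Fin N → X} {F : Set (Fin k → X)}
    (σ : Equiv.Perm (Fin N)) (hσ : (fun i => x (σ (Fin.castLE h i))) ∈ F) :
    (N.factorial : ℝ≥0∞)⁻¹ ≤ marginal h (symmetrize N (Measure.dirac x)) F := by
  rw [marginal_symmetrize_dirac, Measure.smul_apply, Measure.finsetSum_apply, smul_eq_mul]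
  calc (N.factorial : ℝ≥0∞)⁻¹ = (N.factorial : ℝ≥0∞)⁻¹ * Measure.dirac _ F := by
        rw [Measure.dirac_apply_of_mem hσ, mul_one]
    _ ≤ _ := by
      gcongr
      exact Finset.single_le_sum (f := fun τ : Equiv.Perm (Fin N) =>
        Measure.dirac (fun i => x (τ (Fin.castLE h i))) F) (fun _ _ => zero_le) (Finset.mem_univ σ)

lemma mem_image_eval_of_marginal_symmetrize_dirac_compl_lt {x : Fin N → X}
    {K : Set (Fin k → X)} (j : Fin k)
    (hx : marginal h (symmetrize N (Measure.dirac x)) Kᶜ < (N.factorial : ℝ≥0∞)⁻¹) (i : Fin N) :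
    x i ∈ (fun y => y j) '' K := by
  by_contra hi
  have hσ : (fun l => x (Equiv.swap (Fin.castLE h j) i (Fin.castLE h l))) ∈ Kᶜ :=
    fun hmem => hi ⟨_, hmem, by simp⟩
  exact (inv_factorial_le_marginal_symmetrize_dirac h _ hσ).not_gt hx

def marginalSymmetrizeDirac (x : Fin N → X) : ProbabilityMeasure (Fin k → X) :=
  ⟨marginal h (symmetrize N (Measure.dirac x)), isProbabilityMeasure_marginal_symmetrize_dirac h x⟩

lemma integral_marginal_symmetrize_dirac [TopologicalSpace X] [SecondCountableTopology X]
    [OpensMeasurableSpace X] (x : Fin N → X) (φ : BoundedContinuousFunction (Fin k → X) ℝ) :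
    ∫ y, φ y ∂(marginal h (symmetrize N (Measure.dirac x))) =
      (N.factorial : ℝ)⁻¹ * ∑ σ : Equiv.Perm (Fin N), φ (fun i => x (σ (Fin.castLE h i))) := by
  rw [marginal_symmetrize_dirac, integral_smul_measure,
    integral_finsetSum_measure fun σ _ => φ.integrable _]
  simp [integral_dirac' _ _ φ.continuous.stronglyMeasurable]

lemma continuous_marginalSymmetrizeDirac [TopologicalSpace X] [SecondCountableTopology X]
    [OpensMeasurableSpace X] : Continuous (marginalSymmetrizeDirac (X := X) h) := by
  refine continuous_iff_continuousAt.mpr fun x => ?_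
  refine ProbabilityMeasure.tendsto_iff_forall_integral_tendsto.mpr fun φ => ?_
  simp only [marginalSymmetrizeDirac, ProbabilityMeasure.coe_mk,
    integral_marginal_symmetrize_dirac]
  refine (tendsto_finsetSum _ fun σ _ => ?_).const_mul _
  exact (φ.continuous.comp (by fun_prop)).continuousAt

end Marginal

lemma isTightMeasureSet_range_of_tendsto {Y : Type*} [TopologicalSpace Y] [PolishSpace Y]
    [MeasurableSpace Y] [BorelSpace Y] {μs : ℕ → ProbabilityMeasure Y} {μ : ProbabilityMeasure Y}
    (hμs : Tendsto μs atTop (𝓝 μ)) :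
    IsTightMeasureSet (Set.range fun n => (μs n : Measure Y)) := by
  let := TopologicalSpace.upgradeIsCompletelyMetrizable Y
  have hcl : IsCompact (closure (Set.range μs)) :=
    hμs.isCompact_insert_range.closure_of_subset (Set.subset_insert _ _)
  rw [← Function.comp_def, Set.range_comp]
  exact isTightMeasureSet_of_isCompact_closure hcl

/-- For a Polish space `X` and `N ≥ k ≥ 2`, the set
`E_{N,k} = {M_k S_N δ_{(x_1,…,x_N)} : x ∈ X^N}` of extreme points of `𝒫_{N-rep}(X^k)` is
closed under narrow convergence. -/
theorem ENk_closed_narrow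
    {X : Type*} [MeasurableSpace X] [TopologicalSpace X] [PolishSpace X] [BorelSpace X]
    {k N : ℕ} (hk : 2 ≤ k) (hkN : k ≤ N)
    (μs : ℕ → Measure (Fin k → X)) (μ : Measure (Fin k → X)) (hμ : IsProbabilityMeasure μ)
    (hmem : ∀ n, μs n ∈ ENk (X := X) hkN) (hconv : NarrowTendsto μs μ) :
    μ ∈ ENk (X := X) hkN := by
  choose xs hxs using hmem
  have htend : Tendsto (fun n => marginalSymmetrizeDirac hkN (xs n)) atTop
      (𝓝 (⟨μ, hμ⟩ : ProbabilityMeasure (Fin k → X))) := by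
    refine ProbabilityMeasure.tendsto_iff_forall_integral_tendsto.mpr fun φ => ?_
    simpa only [marginalSymmetrizeDirac, ProbabilityMeasure.coe_mk, ← hxs] using hconv φ
  have hc : (N.factorial : ℝ≥0∞)⁻¹ ≠ 0 := ENNReal.inv_ne_zero.mpr (natCast_ne_top _)
  have hhalf : (N.factorial : ℝ≥0∞)⁻¹ / 2 < (N.factorial : ℝ≥0∞)⁻¹ :=
    ENNReal.half_lt_self hc (by simpa using N.factorial_ne_zero)
  obtain ⟨K, hK, hKμs⟩ := isTightMeasureSet_iff_exists_isCompact_measure_compl_le.mp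
    (isTightMeasureSet_range_of_tendsto htend) _ (ENNReal.half_pos hc)
  let j : Fin k := ⟨0, by omega⟩
  have hxsK (n : ℕ) : xs n ∈ Set.univ.pi fun _ => (fun y => y j) '' K := fun i _ =>
    mem_image_eval_of_marginal_symmetrize_dirac_compl_lt hkN j
      ((hKμs _ ⟨n, rfl⟩).trans_lt hhalf) i
  obtain ⟨x, -, φ, hφ, hxsφ⟩ :=
    (isCompact_univ_pi fun _ => hK.image (continuous_apply j)).tendsto_subseq hxsK
  -- instance search does not find this one unaided
  have := ProbabilityMeasure.t2Space (Fin k → X)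
  have hlim := tendsto_nhds_unique (htend.comp hφ.tendsto_atTop)
    (((continuous_marginalSymmetrizeDirac hkN).tendsto x).comp hxsφ)
  exact ⟨x, congrArg ProbabilityMeasure.toMeasure hlim⟩

end FiniteDeFinetti
end
end
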